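/- A bounded real-valued random variable is infinitely divisible if and only if it is almost surely constant. -/

import Mathlib

open MeasureTheory

/-- A real random variable `X` (on a probability space `(Ω, μ)`) is infinitely divisible if
for every `n ≥ 1` there exist i.i.d. random variables `Y 0, …, Y (n-1)` on some probability
space whose sum has the same distribution as `X`. -/
def IsInfinitelyDivisible {Ω : Type*} [MeasurableSpace Ω] (μ : Measure Ω) (X : Ω → ℝ) : Prop :=
  ∀ n : ℕ, 0 < n →
    ∃ (Ω' : Type) (_ : MeasurableSpace Ω') (μ' : Measure Ω') (Y : Fin n → Ω' → ℝ),
      IsProbabilityMeasure μ' ∧ (∀ i, Measurable (Y i)) ∧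
      ProbabilityTheory.iIndepFun Y μ' ∧
      (∀ i j, μ'.map (Y i) = μ'.map (Y j)) ∧
      μ'.map (fun ω => ∑ i, Y i ω) = μ.map X

/-!
If `X = Y₁ + ⋯ + Yₙ` with the `Yᵢ` i.i.d. and `|X| ≤ C`, then `|Yᵢ| ≤ C / n` almost
surely: the probability `p` of `{Yᵢ > C / n}` satisfies
`pⁿ = P(Yⱼ > C / n for all j) ≤ P(X > C) = 0`.
Hence `Var X = ∑ Var Yᵢ ≤ n (C / n)² = C² / n` for every `n`, so `Var X = 0`.
Conversely, under a Dirac measure any family is independent, so a constant `c` is the sum of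
`n` copies of the constant `c / n`.
-/

open ProbabilityTheory Filter

namespace ProbabilityTheory

variable {ι Ω : Type*} [MeasurableSpace Ω]

lemma iIndepFun_dirac [MeasurableSingletonClass Ω] {β : ι → Type*}
    [∀ i, MeasurableSpace (β i)] (ω : Ω) (f : ∀ i, Ω → β i) :
    iIndepFun f (Measure.dirac ω) := by
  rw [iIndepFun_iff_measure_inter_preimage_eq_mul]
  intro S sets _
  simp [Measure.dirac_apply, prod_indicator_const_apply]

variable {μ : Measure Ω} [Fintype ι] {Y : ι → Ω → ℝ}

lemma iIndepFun.measure_preimage_eq_zero_of_measure_iInter (hind : iIndepFun Y μ)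
    (hident : ∀ i j, μ.map (Y i) = μ.map (Y j)) (hY : ∀ i, Measurable (Y i)) {s : Set ℝ}
    (hs : MeasurableSet s) (h : μ (⋂ j, Y j ⁻¹' s) = 0) (i : ι) : μ (Y i ⁻¹' s) = 0 := by
  have hsame : ∀ j, μ (Y j ⁻¹' s) = μ (Y i ⁻¹' s) := fun j => by
    rw [← Measure.map_apply (hY j) hs, hident j i, Measure.map_apply (hY i) hs]
  rw [hind.meas_iInter fun j => ⟨s, hs, rfl⟩, Finset.prod_congr rfl fun j _ => hsame j,
    Finset.prod_const, Finset.card_univ] at h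
  have : Nonempty ι := ⟨i⟩
  exact pow_eq_zero_iff Fintype.card_ne_zero |>.mp h

lemma iIndepFun.ae_le_div_card_of_ae_sum_le (hind : iIndepFun Y μ)
    (hident : ∀ i j, μ.map (Y i) = μ.map (Y j)) (hY : ∀ i, Measurable (Y i)) {C : ℝ}
    (hS : ∀ᵐ ω ∂μ, ∑ j, Y j ω ≤ C) (i : ι) :
    ∀ᵐ ω ∂μ, Y i ω ≤ C / Fintype.card ι := by
  have : Nonempty ι := ⟨i⟩
  have hcard : (0 : ℝ) < Fintype.card ι := Nat.cast_pos.mpr Fintype.card_pos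
  have hjoint :
      (⋂ j, Y j ⁻¹' Set.Ioi (C / Fintype.card ι)) ⊆ {ω | ¬∑ j, Y j ω ≤ C} := by
    intro ω hω
    simp only [Set.mem_iInter, Set.mem_preimage, Set.mem_Ioi] at hω
    have := Finset.sum_lt_sum_of_nonempty Finset.univ_nonempty fun j _ => hω j
    rw [Finset.sum_const, Finset.card_univ, nsmul_eq_mul, mul_div_cancel₀ _ hcard.ne'] at this
    exact not_le.mpr this
  rw [ae_iff]
  simp only [not_le]
  exact hind.measure_preimage_eq_zero_of_measure_iInter hident hY
    measurableSet_Ioi (measure_mono_null hjoint (ae_iff.mp hS)) i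

lemma iIndepFun.ae_abs_le_div_card_of_ae_abs_sum_le (hind : iIndepFun Y μ)
    (hident : ∀ i j, μ.map (Y i) = μ.map (Y j)) (hY : ∀ i, Measurable (Y i)) {C : ℝ}
    (hS : ∀ᵐ ω ∂μ, |∑ j, Y j ω| ≤ C) (i : ι) :
    ∀ᵐ ω ∂μ, |Y i ω| ≤ C / Fintype.card ι := by
  have hupper := hind.ae_le_div_card_of_ae_sum_le hident hY
    (hS.mono fun ω h => (le_abs_self _).trans h) i
  have hneg_ident : ∀ i j, μ.map (Neg.neg ∘ Y i) = μ.map (Neg.neg ∘ Y j) := fun i j => by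
    rw [← Measure.map_map measurable_neg (hY i), ← Measure.map_map measurable_neg (hY j),
      hident]
  have hlower :=
    (hind.comp (fun _ => Neg.neg) fun _ => measurable_neg).ae_le_div_card_of_ae_sum_le
      hneg_ident (fun j => (hY j).neg)
      (hS.mono fun ω h => by simpa using (neg_le_abs _).trans h) i
  filter_upwards [hupper, hlower] with ω hu hl
  exact abs_le.mpr ⟨by simpa using neg_le.mpr hl, hu⟩

lemma iIndepFun.variance_sum_le [IsProbabilityMeasure μ] (hind : iIndepFun Y μ)
    (hident : ∀ i j, μ.map (Y i) = μ.map (Y j)) (hY : ∀ i, Measurable (Y i)) {C : ℝ}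
    (hS : ∀ᵐ ω ∂μ, |∑ j, Y j ω| ≤ C) :
    variance (∑ j, Y j) μ ≤ C ^ 2 / Fintype.card ι := by
  have hbdd := hind.ae_abs_le_div_card_of_ae_abs_sum_le hident hY hS
  have hvar : ∀ i, variance (Y i) μ ≤ (C / Fintype.card ι) ^ 2 := fun i =>
    calc variance (Y i) μ ≤ ((C / Fintype.card ι - -(C / Fintype.card ι)) / 2) ^ 2 :=
          variance_le_sq_of_bounded ((hbdd i).mono fun ω h => abs_le.mp h) (hY i).aemeasurable
      _ = (C / Fintype.card ι) ^ 2 := by ring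
  have hmem : ∀ i, MemLp (Y i) 2 μ := fun i =>
    memLp_of_bounded ((hbdd i).mono fun ω h => abs_le.mp h) (hY i).aestronglyMeasurable 2
  calc variance (∑ j, Y j) μ = ∑ j, variance (Y j) μ :=
        IndepFun.variance_sum (fun j _ => hmem j) fun i _ j _ hij => hind.indepFun hij
    _ ≤ Fintype.card ι * (C / Fintype.card ι) ^ 2 := by
        simpa using Finset.sum_le_sum fun j (_ : j ∈ Finset.univ) => hvar j
    _ = C ^ 2 / Fintype.card ι := by
        rcases eq_or_ne (Fintype.card ι : ℝ) 0 with h | h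
        · simp [h]
        · field_simp

end ProbabilityTheory

section

variable {Ω : Type*} [MeasurableSpace Ω] {μ : Measure Ω} {X : Ω → ℝ}

lemma IsInfinitelyDivisible.variance_le (h : IsInfinitelyDivisible μ X) (hX : Measurable X)
    {C : ℝ} (hC : ∀ ω, |X ω| ≤ C) {n : ℕ} (hn : 0 < n) : variance X μ ≤ C ^ 2 / n := by
  obtain ⟨Ω', _, μ', Y, _, hY, hind, hident, hmap⟩ := h n hn
  have hsum : (fun ω => ∑ i, Y i ω) = ∑ i, Y i := by ext; simp
  have hS : Measurable (∑ i, Y i) := hsum ▸ Finset.measurable_sum _ fun i _ => hY i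
  rw [hsum] at hmap
  have hXS : IdentDistrib X (∑ i, Y i) μ μ' := ⟨hX.aemeasurable, hS.aemeasurable, hmap.symm⟩
  have hSbdd : ∀ᵐ ω ∂μ', |∑ i, Y i ω| ≤ C := by
    simpa using hXS.ae_mem_snd (t := {x | |x| ≤ C})
      (measurableSet_le measurable_abs measurable_const) (ae_of_all _ hC)
  simpa [hXS.variance_eq] using hind.variance_sum_le hident hY hSbdd

lemma IsInfinitelyDivisible.ae_eq_const [IsFiniteMeasure μ] (h : IsInfinitelyDivisible μ X)
    (hX : Measurable X) {C : ℝ} (hC : ∀ ω, |X ω| ≤ C) :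
    ∃ c : ℝ, X =ᵐ[μ] fun _ => c := by
  have hvar : variance X μ ≤ 0 :=
    ge_of_tendsto (tendsto_const_div_atTop_nhds_zero_nat (C ^ 2))
      (eventually_atTop.mpr ⟨1, fun n hn => h.variance_le hX hC hn⟩)
  have hXm : MemLp X 2 μ :=
    memLp_of_bounded (ae_of_all _ fun ω => abs_le.mp (hC ω)) hX.aestronglyMeasurable 2
  exact ⟨μ[X], ae_eq_integral_of_variance_eq_zero hXm (hvar.antisymm (variance_nonneg X μ))⟩

lemma isInfinitelyDivisible_of_ae_eq_const [IsProbabilityMeasure μ] {c : ℝ}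
    (hc : X =ᵐ[μ] fun _ => c) : IsInfinitelyDivisible μ X := by
  intro n hn
  refine ⟨Unit, inferInstance, Measure.dirac (), fun _ _ => c / n, inferInstance,
    fun _ => measurable_const, iIndepFun_dirac _ _, fun _ _ => rfl, ?_⟩
  simp [Measure.map_congr hc, Measure.map_const, mul_div_cancel₀, hn.ne']

end

/-- A bounded real-valued random variable is infinitely divisible iff it is a.s. constant. -/
theorem stmt_5 {Ω : Type*} [MeasurableSpace Ω] (μ : Measure Ω) [IsProbabilityMeasure μ]
    (X : Ω → ℝ) (hX : Measurable X) (hbdd : ∃ C : ℝ, ∀ ω, |X ω| ≤ C) :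
    IsInfinitelyDivisible μ X ↔ ∃ c : ℝ, X =ᵐ[μ] fun _ => c := by
  obtain ⟨C, hC⟩ := hbdd
  exact ⟨fun h => h.ae_eq_const hX hC,
    fun ⟨_, hc⟩ => isInfinitelyDivisible_of_ae_eq_const hc⟩
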